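/- If real numbers $C_0, C_1, \dots, C_d$ satisfy $\sum_{p=0}^{d} C_p \cos^{2p}\theta \sin^{2(d-p)}\theta = C_d$ for all real $\theta$, then $C_p = \binom{d}{p} C_d$ for every $0 \le p \le d$. -/

import Mathlib

/-!
Putting x = cos²θ, the hypothesis says ∑ C_p x^p (1 - x)^(d - p) = C_d for x ∈ [0, 1].
Substituting x = t / (1 + t) and clearing the denominator (1 + t)^d turns this into
∑ C_p t^p = C_d (1 + t)^d for all t ≥ 0, a polynomial identity; comparing coefficients with
the binomial expansion of (1 + t)^d gives C_p = (d choose p) C_d.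
-/

open Finset

open Polynomial in
theorem coeff_eq_zero_of_sum_mul_pow_eq_zero {R : Type*} [CommRing R] [IsDomain R] {S : Set R}
    (hS : S.Infinite) {a : ℕ → R} {n : ℕ} (h : ∀ t ∈ S, ∑ p ∈ range n, a p * t ^ p = 0) :
    ∀ p < n, a p = 0 := by
  set Q : R[X] := ∑ p ∈ range n, C (a p) * X ^ p
  have hQ : Q = 0 := eq_zero_of_infinite_isRoot Q <| hS.mono fun t ht => by
    simpa [Q, eval_finsetSum] using h t ht
  intro p hp
  simpa [Q, finsetSum_coeff, coeff_C_mul_X_pow, hp] using congrArg (coeff · p) hQ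

theorem mul_sum_mul_pow_mul_one_sub_pow {K : Type*} [Field K] (a : ℕ → K) (d : ℕ) {t : K}
    (ht : 1 + t ≠ 0) :
    (1 + t) ^ d * ∑ p ∈ range (d + 1), a p * (t / (1 + t)) ^ p * (1 - t / (1 + t)) ^ (d - p) =
      ∑ p ∈ range (d + 1), a p * t ^ p := by
  rw [mul_sum]
  refine sum_congr rfl fun p hp => ?_
  have hpd : p ≤ d := Nat.lt_succ_iff.mp (mem_range.mp hp)
  rw [one_sub_div ht, add_sub_cancel_right, div_pow, div_pow, one_pow,
    ← Nat.add_sub_cancel' hpd, pow_add, Nat.add_sub_cancel_left]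
  field_simp

theorem eq_choose_mul_of_sum_mul_pow_mul_one_sub_pow_eq {K : Type*} [Field K] [LinearOrder K]
    [IsStrictOrderedRing K] {a : ℕ → K} {d : ℕ} {c : K}
    (h : ∀ x ∈ Set.Icc (0 : K) 1, ∑ p ∈ range (d + 1), a p * x ^ p * (1 - x) ^ (d - p) = c) :
    ∀ p ≤ d, a p = d.choose p * c := by
  have hpow : ∀ t ∈ Set.Ici (0 : K), ∑ p ∈ range (d + 1), (a p - d.choose p * c) * t ^ p = 0 := by
    intro t ht
    have ht1 : (0 : K) < 1 + t := by linarith [Set.mem_Ici.mp ht]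
    have hx : t / (1 + t) ∈ Set.Icc (0 : K) 1 :=
      ⟨div_nonneg ht ht1.le, (div_le_one ht1).mpr (by linarith)⟩
    have hsum : ∑ p ∈ range (d + 1), a p * t ^ p = c * (1 + t) ^ d := by
      rw [← mul_sum_mul_pow_mul_one_sub_pow a d ht1.ne', h _ hx, mul_comm]
    have hbinom : ∑ p ∈ range (d + 1), d.choose p * c * t ^ p = c * (1 + t) ^ d := by
      rw [add_comm 1 t, add_pow, mul_sum]
      exact sum_congr rfl fun p _ => by ring
    simp only [sub_mul, sum_sub_distrib, hsum, hbinom, sub_self]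
  intro p hp
  exact sub_eq_zero.mp <| coeff_eq_zero_of_sum_mul_pow_eq_zero (Set.Ici_infinite 0) hpow p
    (Nat.lt_succ_of_le hp)

theorem exists_cos_sq_eq_and_sin_sq_eq {x : ℝ} (hx : x ∈ Set.Icc 0 1) :
    ∃ θ : ℝ, Real.cos θ ^ 2 = x ∧ Real.sin θ ^ 2 = 1 - x := by
  have hcos : Real.cos (Real.arccos √x) = √x :=
    Real.cos_arccos (by linarith [Real.sqrt_nonneg x]) (Real.sqrt_le_one.mpr hx.2)
  exact ⟨_, by rw [hcos, Real.sq_sqrt hx.1], by rw [Real.sin_sq, hcos, Real.sq_sqrt hx.1]⟩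

theorem stmt_0 (d : ℕ) (C : ℕ → ℝ)
    (h : ∀ θ : ℝ, ∑ p ∈ Finset.range (d + 1),
      C p * Real.cos θ ^ (2 * p) * Real.sin θ ^ (2 * (d - p)) = C d) :
    ∀ p ≤ d, C p = (d.choose p : ℝ) * C d := by
  refine eq_choose_mul_of_sum_mul_pow_mul_one_sub_pow_eq fun x hx => ?_
  obtain ⟨θ, hcos, hsin⟩ := exists_cos_sq_eq_and_sin_sq_eq hx
  simpa only [pow_mul, hcos, hsin] using h θ
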